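/- Let α, β, γ, δ be positive integers with γ > α, and A = α·δ + β·γ. Then the vector (γ-α, β+δ) lies in the lattice generated by (α,-β) and (γ,δ); moreover, for every integer x with 0 < x < β+δ, the vector (γ-α, β+δ-x) does not lie in that lattice. -/

import Mathlib

/-!
Subtracting the lattice point `(γ - α, β + δ) = -(α, -β) + (γ, δ)` reduces the claim to the
lattice points on the second axis: if `p (α, -β) + q (γ, δ) = (0, -x)` with `x > 0`, then
`p α = -q γ` forces `p ≥ 1` and `q ≤ -1`, hence `x = p β - q δ ≥ β + δ`.
-/

section AxisPoints

variable {α β γ δ p q : ℤ}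

lemma neg_of_mul_add_mul_eq_zero (hα : 0 < α) (hγ : 0 < γ) (h : p * α + q * γ = 0)
    (hp : 0 < p) : q < 0 := by
  nlinarith

lemma nonneg_of_mul_add_mul_eq_zero (hα : 0 < α) (hγ : 0 < γ) (h : p * α + q * γ = 0)
    (hp : p ≤ 0) : 0 ≤ q := by
  nlinarith

lemma add_le_of_mul_add_mul_eq_zero (hα : 0 < α) (hγ : 0 < γ) (hβ : 0 ≤ β) (hδ : 0 ≤ δ)
    (h : p * α + q * γ = 0) (hx : 0 < p * β - q * δ) : β + δ ≤ p * β - q * δ := by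
  have hp : 0 < p := by
    by_contra! hp
    have hq := nonneg_of_mul_add_mul_eq_zero hα hγ h hp
    nlinarith
  have hq := neg_of_mul_add_mul_eq_zero hα hγ h hp
  nlinarith

end AxisPoints

theorem alpha_gamma_lemma_b_general (α β γ δ : ℤ) (hα : 0 < α) (hβ : 0 < β) (hγ : 0 < γ) (hδ : 0 < δ) :
    (∃ m n : ℤ, ((γ - α : ℤ), β + δ) = (m * α + n * γ, m * (-β) + n * δ)) ∧
    (∀ x : ℤ, 0 < x → x < β + δ →
      ¬ ∃ m n : ℤ, ((γ - α : ℤ), β + δ - x) = (m * α + n * γ, m * (-β) + n * δ)) := by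
  refine ⟨⟨-1, 1, by ext <;> ring⟩, ?_⟩
  rintro x hx hxlt ⟨m, n, h⟩
  obtain ⟨h₁, h₂⟩ := Prod.ext_iff.mp h
  have haxis : (m + 1) * α + (n - 1) * γ = 0 := by linarith
  have hx_eq : x = (m + 1) * β - (n - 1) * δ := by linarith
  have := add_le_of_mul_add_mul_eq_zero hα hγ hβ.le hδ.le haxis (hx_eq ▸ hx)
  omega

theorem alpha_gamma_lemma_b (α β γ δ A : ℤ) (hα : 0 < α) (hβ : 0 < β) (hγ : 0 < γ) (hδ : 0 < δ)
    (hga : γ > α) (hA : A = α * δ + β * γ) :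
    (∃ m n : ℤ, ((γ - α : ℤ), β + δ) = (m * α + n * γ, m * (-β) + n * δ)) ∧
    (∀ x : ℤ, 0 < x → x < β + δ →
      ¬ ∃ m n : ℤ, ((γ - α : ℤ), β + δ - x) = (m * α + n * γ, m * (-β) + n * δ)) :=
  alpha_gamma_lemma_b_general α β γ δ hα hβ hγ hδ
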